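/- arXiv:0911.2077 — 2 statements merged into one kernel-verified Lean document; each statement's English description precedes it below -/
import Mathlib

section
/- For odd n and p ∈ [0, 1/2), P[B(p,n) ≥ n/2] ≥ (2σ)^{n+1} e^{l(n+1)} / √(2π(n+1)), where σ = √(p(1−p)) and l(n) = −(9n+1)/(3n(12n+1)). -/
/-!
The tail is at least its first term `C(n, k) p^k (1-p)^(k-1)`, `k = (n+1)/2`, which dominates
`C(n, k) σ^(2k) = centralBinom k / 2 * σ^(2k)`. Robbins' two-sided Stirling bounds
`√π e^(1/(12m+1)) ≤ m! / (√(2m) (m/e)^m) ≤ √π e^(1/(12m))` give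
`centralBinom k ≥ 4^k e^(1/(24k+1) - 1/(6k)) / √(πk)`, and `l (2k)` is exactly this exponent.
-/

open Real

noncomputable def binomTail (n k : ℕ) (p : ℝ) : ℝ :=
  ∑ h ∈ Finset.Icc k n, (n.choose h : ℝ) * p ^ h * (1 - p) ^ (n - h)

noncomputable def l (x : ℝ) : ℝ := -(9 * x + 1) / (3 * x * (12 * x + 1))

open Filter Topology Nat Stirling

namespace Stirling

theorem log_stirlingSeq_sdiff_ge (m : ℕ) :
    1 / (12 * ((m : ℝ) + 1) + 1) - 1 / (12 * ((m : ℝ) + 2) + 1) ≤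
      log (stirlingSeq (m + 1)) - log (stirlingSeq (m + 2)) := by
  -- keep only the first term `1 / (3 (2m + 3)^2)` of the series
  refine le_trans ?_ (le_hasSum (log_stirlingSeq_sdiff_hasSum m) 0 fun j _ => by positivity)
  push_cast
  rw [div_sub_div _ _ (by positivity) (by positivity)]
  field_simp
  nlinarith [(m.cast_nonneg : (0 : ℝ) ≤ m)]

theorem tendsto_log_stirlingSeq_sub_inv (a : ℝ) :
    Tendsto (fun m : ℕ => log (stirlingSeq (m + 1)) - 1 / (12 * ((m : ℝ) + 1) + a)) atTop
      (𝓝 (log √π)) := by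
  have hlog := (continuousAt_log (by positivity)).tendsto.comp
    (tendsto_stirlingSeq_sqrt_pi.comp (tendsto_add_atTop_nat 1))
  have hinv : Tendsto (fun m : ℕ => 1 / (12 * ((m : ℝ) + 1) + a)) atTop (𝓝 0) := by
    simp_rw [one_div]
    refine tendsto_inv_atTop_zero.comp (tendsto_atTop_add_const_right _ _ ?_)
    exact (tendsto_atTop_add_const_right _ _ tendsto_natCast_atTop_atTop).const_mul_atTop
      (by norm_num)
  simpa using hlog.sub hinv

theorem stirlingSeq_le_sqrt_pi_mul_exp {n : ℕ} (hn : n ≠ 0) :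
    stirlingSeq n ≤ √π * exp (1 / (12 * n)) := by
  obtain ⟨m, rfl⟩ := exists_eq_succ_of_ne_zero hn
  push_cast
  have hmono : Monotone fun m : ℕ => log (stirlingSeq (m + 1)) - 1 / (12 * ((m : ℝ) + 1) + 0) := by
    refine monotone_nat_of_le_succ fun m => ?_
    have h := log_stirlingSeq_sdiff_le (m + 1)
    have e : 1 / (12 * ((m + 1 : ℕ) : ℝ) * ((m + 1 : ℕ) + 1)) =
        1 / (12 * ((m : ℝ) + 1)) - 1 / (12 * ((m : ℝ) + 1 + 1)) := by
      push_cast; field_simp; ring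
    rw [e] at h
    push_cast
    simp only [add_zero]
    linarith
  have h := hmono.ge_of_tendsto (tendsto_log_stirlingSeq_sub_inv 0) m
  rwa [add_zero, sub_le_iff_le_add, log_le_iff_le_exp (stirlingSeq'_pos m), exp_add,
    exp_log (by positivity)] at h

theorem sqrt_pi_mul_exp_le_stirlingSeq {n : ℕ} (hn : n ≠ 0) :
    √π * exp (1 / (12 * n + 1)) ≤ stirlingSeq n := by
  obtain ⟨m, rfl⟩ := exists_eq_succ_of_ne_zero hn
  push_cast
  have hanti : Antitone fun m : ℕ => log (stirlingSeq (m + 1)) - 1 / (12 * ((m : ℝ) + 1) + 1) := by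
    refine antitone_nat_of_succ_le fun m => ?_
    have h := log_stirlingSeq_sdiff_ge m
    push_cast
    ring_nf at h ⊢
    linarith
  have h := hanti.le_of_tendsto (tendsto_log_stirlingSeq_sub_inv 1) m
  rwa [le_sub_iff_add_le, le_log_iff_exp_le (stirlingSeq'_pos m), exp_add,
    exp_log (by positivity)] at h

end Stirling

theorem Nat.centralBinom_mul_factorial_mul_factorial (k : ℕ) :
    k.centralBinom * k ! * k ! = (2 * k)! := by
  rw [centralBinom_eq_two_mul_choose]
  simpa [two_mul] using Nat.choose_mul_factorial_mul_factorial (le_add_self (a := k) (b := k))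

theorem centralBinom_mul_sqrt_eq_stirlingSeq {k : ℕ} (hk : k ≠ 0) :
    (k.centralBinom : ℝ) * √k = 4 ^ k * stirlingSeq (2 * k) / stirlingSeq k ^ 2 := by
  have hfac : (k.centralBinom : ℝ) * k ! * k ! = (2 * k)! := by
    exact_mod_cast k.centralBinom_mul_factorial_mul_factorial
  have hk' : (0 : ℝ) < k := by positivity
  have hs : √(2 * ((2 * k : ℕ) : ℝ)) = 2 * √k := by
    push_cast
    rw [show (2 : ℝ) * (2 * k) = 2 ^ 2 * k by ring, sqrt_mul (by positivity), sqrt_sq (by norm_num)]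
  simp only [stirlingSeq]
  rw [hs, ← hfac, show (4 : ℝ) ^ k = 2 ^ (2 * k) by rw [pow_mul]; norm_num]
  simp_rw [div_pow, mul_pow, sq_sqrt (by positivity : (0:ℝ) ≤ 2 * k)]
  push_cast
  field_simp
  rw [sq_sqrt hk'.le]
  ring

theorem four_pow_mul_exp_le_centralBinom_mul_sqrt {k : ℕ} (hk : k ≠ 0) :
    4 ^ k * exp (1 / (24 * k + 1) - 1 / (6 * k)) ≤ k.centralBinom * √(π * k) := by
  have h2k := sqrt_pi_mul_exp_le_stirlingSeq (mul_ne_zero two_ne_zero hk)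
  have hsk := stirlingSeq_le_sqrt_pi_mul_exp hk
  have hpos : 0 < stirlingSeq k := by
    obtain ⟨m, rfl⟩ := exists_eq_succ_of_ne_zero hk
    exact stirlingSeq'_pos m
  push_cast at h2k
  calc 4 ^ k * exp (1 / (24 * k + 1) - 1 / (6 * k))
      = 4 ^ k * (√π * exp (1 / (12 * (2 * k) + 1))) * √π / (√π * exp (1 / (12 * k))) ^ 2 := by
        have hb : exp (1 / (12 * k)) ^ 2 = exp (1 / (6 * k)) := by
          rw [← exp_nat_mul]; congr 1; field_simp; norm_num
        rw [exp_sub, mul_pow, hb, sq_sqrt pi_pos.le, show (12 : ℝ) * (2 * k) = 24 * k by ring]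
        field_simp
        exact (sq_sqrt pi_pos.le).symm
    _ ≤ 4 ^ k * stirlingSeq (2 * k) * √π / stirlingSeq k ^ 2 := by
        have h2pos : 0 ≤ stirlingSeq (2 * k) := (by positivity : (0 : ℝ) ≤ _).trans h2k
        gcongr
    _ = k.centralBinom * √(π * k) := by
        rw [sqrt_mul pi_pos.le, mul_left_comm, centralBinom_mul_sqrt_eq_stirlingSeq hk]
        ring

theorem Nat.centralBinom_succ_eq_two_mul_choose (m : ℕ) :
    (m + 1).centralBinom = 2 * (2 * m + 1).choose (m + 1) := by
  rw [centralBinom_eq_two_mul_choose, show 2 * (m + 1) = 2 * m + 1 + 1 by ring, choose_succ_succ',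
    ← choose_symm_half, ← two_mul]

theorem choose_mul_pow_le_binomTail {n k : ℕ} (hk : k ≤ n) {p : ℝ} (hp0 : 0 ≤ p) (hp1 : p ≤ 1) :
    (n.choose k : ℝ) * p ^ k * (1 - p) ^ (n - k) ≤ binomTail n k p :=
  Finset.single_le_sum (f := fun h => (n.choose h : ℝ) * p ^ h * (1 - p) ^ (n - h))
    (fun i _ => by positivity) (Finset.mem_Icc.mpr ⟨le_rfl, hk⟩)

theorem choose_mul_pow_le_binomTail_half (j : ℕ) {p : ℝ} (hp0 : 0 ≤ p) (hp1 : p ≤ 1) :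
    ((2 * j + 1).choose (j + 1) : ℝ) * (p * (1 - p)) ^ (j + 1) ≤
      binomTail (2 * j + 1) (j + 1) p := by
  have hq : 0 ≤ 1 - p := by linarith
  refine le_trans ?_ (choose_mul_pow_le_binomTail (by omega) hp0 hp1)
  rw [show 2 * j + 1 - (j + 1) = j by omega, mul_pow, ← mul_assoc]
  exact mul_le_mul_of_nonneg_left (pow_le_pow_of_le_one hq (by linarith) j.le_succ)
    (by positivity)

theorem l_two_mul {x : ℝ} (hx : 0 < x) : l (2 * x) = 1 / (24 * x + 1) - 1 / (6 * x) := by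
  rw [l]
  field_simp
  ring

theorem stmt14 (n : ℕ) (hn : Odd n) (p : ℝ) (hp0 : 0 ≤ p) (hp : p < 1 / 2) :
    binomTail n ((n + 1) / 2) p
      ≥ (2 * Real.sqrt (p * (1 - p))) ^ (n + 1) * Real.exp (l (n + 1))
          / Real.sqrt (2 * π * (n + 1)) := by
  obtain ⟨j, rfl⟩ := hn
  set k := j + 1 with hk
  have hpq : 0 ≤ p * (1 - p) := mul_nonneg hp0 (by linarith)
  have hn1 : ((2 * j + 1 : ℕ) : ℝ) + 1 = 2 * (k : ℝ) := by push_cast [hk]; ring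
  have hσ : (2 * √(p * (1 - p))) ^ (2 * j + 1 + 1) = 4 ^ k * (p * (1 - p)) ^ k := by
    rw [show 2 * j + 1 + 1 = 2 * k by omega, pow_mul, mul_pow, sq_sqrt hpq, ← mul_pow]
    norm_num
  have hsqrt : √(2 * π * (2 * k)) = 2 * √(π * k) := by
    rw [show 2 * π * (2 * k) = 2 ^ 2 * (π * k) by ring, sqrt_mul (by positivity),
      sqrt_sq zero_le_two]
  rw [show (2 * j + 1 + 1) / 2 = k by omega, hn1, l_two_mul (by positivity), hσ, hsqrt, ge_iff_le]
  calc 4 ^ k * (p * (1 - p)) ^ k * exp (1 / (24 * k + 1) - 1 / (6 * k)) / (2 * √(π * k))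
      = 4 ^ k * exp (1 / (24 * k + 1) - 1 / (6 * k)) * (p * (1 - p)) ^ k / (2 * √(π * k)) := by
        ring
    _ ≤ k.centralBinom * √(π * k) * (p * (1 - p)) ^ k / (2 * √(π * k)) := by
        gcongr ?_ * _ / _
        exact four_pow_mul_exp_le_centralBinom_mul_sqrt (succ_ne_zero j)
    _ = ((2 * j + 1).choose k : ℝ) * (p * (1 - p)) ^ k := by
        rw [hk, centralBinom_succ_eq_two_mul_choose]
        field_simp
        push_cast
        ring
    _ ≤ binomTail (2 * j + 1) k p := choose_mul_pow_le_binomTail_half j hp0 (by linarith)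
end

section
/- For odd n, integer k with −n/2 ≤ k ≤ n/2, and p ∈ [0,1], P[B(p,n+2) ≥ (n+2)/2 + k] − P[B(p,n) ≥ n/2 + k] = (p − 1/2 + k/(n+1)) · C(n+1, (n+1)/2 + k) · p^{(n+1)/2+k} (1−p)^{(n+1)/2−k}. -/
/-!
Write `b n h = C(n,h) pʰ (1-p)ⁿ⁻ʰ`. Conditioning on the last trial gives
`P[B(n+1) ≥ j+1] = P[B(n) ≥ j+1] + p · b n j`. Applying this twice, from `n` to `n+2` trials,
the difference of the two tails collapses to `p · b (n+1) (j+1) - (1-p) · b n (j+1)`, and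
`C(n,j+1) (n+1) = C(n+1,j+1) (n-j)` turns this into a single multiple of `b (n+1) (j+1)`.
For `n = 2m+1` and `j = m+k` the factor `p - (n-j)/(n+1)` is `p - 1/2 + k/(n+1)`.
-/

open Real

open Finset

noncomputable def binomTerm (n h : ℕ) (p : ℝ) : ℝ :=
  (n.choose h : ℝ) * p ^ h * (1 - p) ^ (n - h)

lemma binomTerm_of_lt {n h : ℕ} (hnh : n < h) (p : ℝ) : binomTerm n h p = 0 := by
  simp [binomTerm, Nat.choose_eq_zero_of_lt hnh]

lemma binomTerm_succ_succ (n h : ℕ) (p : ℝ) :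
    binomTerm (n + 1) (h + 1) p = p * binomTerm n h p + (1 - p) * binomTerm n (h + 1) p := by
  rcases lt_or_ge h n with hhn | hnh
  · obtain ⟨d, rfl⟩ := Nat.exists_eq_add_of_lt hhn
    simp only [binomTerm, Nat.choose_succ_succ', Nat.cast_add,
      show h + d + 1 + 1 - (h + 1) = d + 1 by omega, show h + d + 1 - h = d + 1 by omega,
      show h + d + 1 - (h + 1) = d by omega]
    ring
  · rw [binomTerm_of_lt (by omega : n < h + 1)]
    simp only [binomTerm, Nat.choose_succ_succ', Nat.choose_eq_zero_of_lt (by omega : n < h + 1),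
      show n + 1 - (h + 1) = n - h by omega, add_zero]
    ring

lemma binomTail_eq_sum_Icc {n N : ℕ} (hnN : n ≤ N) (k : ℕ) (p : ℝ) :
    binomTail n k p = ∑ h ∈ Icc k N, binomTerm n h p :=
  sum_subset (Icc_subset_Icc_right hnN) fun _ hN hn ↦
    binomTerm_of_lt (by simp only [mem_Icc] at hN hn; omega) p

lemma binomTail_eq_binomTerm_add {n j : ℕ} (hjn : j ≤ n) (p : ℝ) :
    binomTail n j p = binomTerm n j p + binomTail n (j + 1) p := by
  rw [binomTail, binomTail, Icc_eq_cons_Ioc hjn, sum_cons, Icc_add_one_left_eq_Ioc]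
  rfl

lemma binomTail_succ_succ (n j : ℕ) (p : ℝ) :
    binomTail (n + 1) (j + 1) p = p * binomTail n j p + (1 - p) * binomTail n (j + 1) p := by
  rw [binomTail_eq_sum_Icc le_rfl, ← map_add_right_Icc, sum_map,
    binomTail_eq_sum_Icc le_rfl, binomTail_eq_sum_Icc (Nat.le_succ n), ← map_add_right_Icc,
    sum_map, mul_sum, mul_sum, ← sum_add_distrib]
  exact sum_congr rfl fun h _ ↦ binomTerm_succ_succ n h p

lemma binomTail_succ_succ_eq_add {n j : ℕ} (hjn : j ≤ n) (p : ℝ) :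
    binomTail (n + 1) (j + 1) p = binomTail n (j + 1) p + p * binomTerm n j p := by
  rw [binomTail_succ_succ, binomTail_eq_binomTerm_add hjn]
  ring

lemma binomTail_add_two_sub {n j : ℕ} (hjn : j < n) (p : ℝ) :
    binomTail (n + 2) (j + 2) p - binomTail n (j + 1) p
      = (p - ((n : ℝ) - j) / (n + 1)) * ((n + 1).choose (j + 1) : ℝ)
          * p ^ (j + 1) * (1 - p) ^ (n - j) := by
  rw [binomTail_succ_succ_eq_add (by omega : j + 1 ≤ n + 1),
    binomTail_succ_succ_eq_add (by omega : j + 1 ≤ n), binomTail_eq_binomTerm_add hjn]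
  have hchoose : (n.choose (j + 1) : ℝ) * (n + 1) = (n + 1).choose (j + 1) * ((n : ℝ) - j) := by
    rw [← Nat.cast_sub hjn.le, show n - j = n + 1 - (j + 1) by omega]
    exact_mod_cast Nat.choose_mul_succ_eq n (j + 1)
  obtain ⟨d, rfl⟩ := Nat.exists_eq_add_of_lt hjn
  simp only [binomTerm, show j + d + 1 + 1 - (j + 1) = d + 1 by omega,
    show j + d + 1 - (j + 1) = d by omega, show j + d + 1 - j = d + 1 by omega] at hchoose ⊢
  field_simp
  linear_combination (-p ^ (j + 1) * (1 - p) ^ (d + 1)) * hchoose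

theorem stmt18_general (n : ℕ) (hn : Odd n) (k : ℤ) (hk1 : -(n : ℤ) ≤ 2 * k) (hk2 : 2 * k ≤ (n : ℤ))
    (p : ℝ) :
    binomTail (n + 2) (((n : ℤ) + 3) / 2 + k).toNat p
        - binomTail n (((n : ℤ) + 1) / 2 + k).toNat p
      = (p - 1 / 2 + (k : ℝ) / ((n : ℝ) + 1))
          * ((n + 1).choose (((n : ℤ) + 1) / 2 + k).toNat : ℝ)
          * p ^ (((n : ℤ) + 1) / 2 + k).toNat
          * (1 - p) ^ (((n : ℤ) + 1) / 2 - k).toNat := by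
  obtain ⟨m, rfl⟩ := hn
  obtain ⟨j, hj⟩ : ∃ j : ℕ, (j : ℤ) = m + k := ⟨(m + k).toNat, by omega⟩
  push_cast at hk1 hk2 ⊢
  rw [show ((2 * m + 1 + 3 : ℤ) / 2 + k).toNat = j + 2 by omega,
    show ((2 * m + 1 + 1 : ℤ) / 2 + k).toNat = j + 1 by omega,
    show ((2 * m + 1 + 1 : ℤ) / 2 - k).toNat = 2 * m + 1 - j by omega,
    binomTail_add_two_sub (by omega) p]
  have hk : (k : ℝ) = j - m := by rw [eq_sub_iff_add_eq']; exact_mod_cast hj.symm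
  congr 3
  rw [hk]
  push_cast
  field_simp
  ring

theorem stmt18 (n : ℕ) (hn : Odd n) (k : ℤ) (hk1 : -(n : ℤ) ≤ 2 * k) (hk2 : 2 * k ≤ (n : ℤ))
    (p : ℝ) (hp0 : 0 ≤ p) (hp1 : p ≤ 1) :
    binomTail (n + 2) (((n : ℤ) + 3) / 2 + k).toNat p
        - binomTail n (((n : ℤ) + 1) / 2 + k).toNat p
      = (p - 1 / 2 + (k : ℝ) / ((n : ℝ) + 1))
          * ((n + 1).choose (((n : ℤ) + 1) / 2 + k).toNat : ℝ)
          * p ^ (((n : ℤ) + 1) / 2 + k).toNat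
          * (1 - p) ^ (((n : ℤ) + 1) / 2 - k).toNat :=
  stmt18_general n hn k hk1 hk2 p
end
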